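/- arXiv:1309.3376 — 2 statements merged into one kernel-verified Lean document; each statement's English description precedes it below -/
import Mathlib

section
/- Let A be a finite set and let P and Q be probability distributions on A. Then KL(P; Q) ≤ Σ_{x ∈ A} kl(P(x), Q(x)), where KL(P; Q) = Σ_{x ∈ A} P(x) log(P(x)/Q(x)) is the Kullback–Leibler divergence and kl(p, q) = p log(p/q) + (1 − p) log((1 − p)/(1 − q)) is the binary relative entropy. -/
open Real Set
open scoped ENNReal

/-- Binary relative entropy `kl(p, q)` (Kullback–Leibler divergence between `Bernoulli p`
and `Bernoulli q`), with the conventions `0 log 0 = 0` and `kl(p, q) = +∞` whenever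
`q ∈ {0,1}` and `p ≠ q`. -/
noncomputable def klBin (p q : ℝ) : ℝ≥0∞ :=
  if (q = 0 ∧ p ≠ 0) ∨ (q = 1 ∧ p ≠ 1) then ⊤
  else ENNReal.ofReal (p * Real.log (p / q) + (1 - p) * Real.log ((1 - p) / (1 - q)))

/-- Kullback–Leibler divergence `KL(P; Q) = Σ_x P(x) log (P(x)/Q(x))` between two
probability mass functions on a finite set, with the conventions `0 log 0 = 0` and
`p log(p/0) = +∞` for `p > 0` (so `KL = +∞` unless `P ≪ Q`). -/
noncomputable def klFin {A : Type*} [Fintype A] (P Q : A → ℝ) : ℝ≥0∞ :=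
  if ∀ a, Q a = 0 → P a = 0 then ENNReal.ofReal (∑ a, P a * Real.log (P a / Q a))
  else ⊤

/-!
Split `kl(P(x), Q(x))` into `P(x) log (P(x)/Q(x))` plus the complementary term
`(1 - P(x)) log ((1 - P(x))/(1 - Q(x)))`. Summed over `x`, the first terms give `KL(P; Q)`, and
the complementary terms form a relative entropy between the vectors `1 - P` and `1 - Q`, which
have the same total mass `|A| - 1`; by Gibbs' inequality that sum is nonnegative.
-/

lemma sub_le_mul_log_div {u v : ℝ} (hu : 0 ≤ u) (hv : 0 ≤ v) (huv : v = 0 → u = 0) :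
    u - v ≤ u * log (u / v) := by
  rcases hu.eq_or_lt with rfl | hu
  · simpa using hv
  have hv : 0 < v := hv.lt_of_ne fun h => hu.ne' (huv h.symm)
  have hlog := one_sub_inv_le_log_of_pos (div_pos hu hv)
  calc u - v = u * (1 - (u / v)⁻¹) := by field_simp
    _ ≤ u * log (u / v) := mul_le_mul_of_nonneg_left hlog hu.le

lemma sum_mul_log_div_nonneg {ι : Type*} (s : Finset ι) {u v : ι → ℝ}
    (hu : ∀ i ∈ s, 0 ≤ u i) (hv : ∀ i ∈ s, 0 ≤ v i) (huv : ∀ i ∈ s, v i = 0 → u i = 0)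
    (hsum : ∑ i ∈ s, v i ≤ ∑ i ∈ s, u i) :
    0 ≤ ∑ i ∈ s, u i * log (u i / v i) :=
  calc (0 : ℝ) ≤ ∑ i ∈ s, (u i - v i) := by rw [Finset.sum_sub_distrib]; linarith
    _ ≤ _ := Finset.sum_le_sum fun i hi => sub_le_mul_log_div (hu i hi) (hv i hi) (huv i hi)

lemma ENNReal.ofReal_sum_le {ι : Type*} (s : Finset ι) (f : ι → ℝ) :
    ENNReal.ofReal (∑ i ∈ s, f i) ≤ ∑ i ∈ s, ENNReal.ofReal (f i) :=
  Finset.le_sum_of_subadditive _ ENNReal.ofReal_zero.le (fun _ _ => ENNReal.ofReal_add_le) s f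

lemma klBin_ne_top_iff {p q : ℝ} : klBin p q ≠ ⊤ ↔ (q = 0 → p = 0) ∧ (q = 1 → p = 1) := by
  unfold klBin
  split_ifs with h <;> simp only [ne_eq, not_true_eq_false, ENNReal.ofReal_ne_top,
    not_false_eq_true, false_iff, true_iff] <;> tauto

lemma klBin_of_ne_top {p q : ℝ} (h : klBin p q ≠ ⊤) :
    klBin p q = ENNReal.ofReal (p * log (p / q) + (1 - p) * log ((1 - p) / (1 - q))) := by
  rw [klBin, if_neg]
  have := klBin_ne_top_iff.1 h
  tauto

lemma le_one_of_sum_eq_one {ι : Type*} [Fintype ι] {P : ι → ℝ} (hP : ∀ i, 0 ≤ P i)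
    (hPsum : ∑ i, P i = 1) (i : ι) : P i ≤ 1 :=
  hPsum ▸ Finset.single_le_sum (fun j _ => hP j) (Finset.mem_univ i)

lemma sum_one_sub_mul_log_div_one_sub_nonneg {ι : Type*} [Fintype ι] {P Q : ι → ℝ}
    (hP : ∀ i, 0 ≤ P i) (hPsum : ∑ i, P i = 1) (hQ : ∀ i, 0 ≤ Q i) (hQsum : ∑ i, Q i = 1)
    (hPQ : ∀ i, Q i = 1 → P i = 1) :
    0 ≤ ∑ i, (1 - P i) * log ((1 - P i) / (1 - Q i)) := by
  refine sum_mul_log_div_nonneg _ (fun i _ => sub_nonneg.2 (le_one_of_sum_eq_one hP hPsum i))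
    (fun i _ => sub_nonneg.2 (le_one_of_sum_eq_one hQ hQsum i))
    (fun i _ h => sub_eq_zero.2 (hPQ i (sub_eq_zero.1 h).symm).symm) ?_
  simp only [Finset.sum_sub_distrib, hPsum, hQsum, le_refl]

/-- **The KL divergence between distributions on a finite set is at most the sum of the
coordinatewise binary relative entropies:** `KL(P; Q) ≤ Σ_x kl(P(x), Q(x))`. -/
theorem klFin_le_sum_klBin {A : Type*} [Fintype A] (P Q : A → ℝ)
    (hP : ∀ a, 0 ≤ P a) (hPsum : ∑ a, P a = 1)
    (hQ : ∀ a, 0 ≤ Q a) (hQsum : ∑ a, Q a = 1) :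
    klFin P Q ≤ ∑ a, klBin (P a) (Q a) := by
  by_cases hinf : ∃ a, klBin (P a) (Q a) = ⊤
  · obtain ⟨a, ha⟩ := hinf
    exact le_top.trans_eq (ENNReal.sum_eq_top.2 ⟨a, Finset.mem_univ a, ha⟩).symm
  have hfin a : klBin (P a) (Q a) ≠ ⊤ := fun ha => hinf ⟨a, ha⟩
  have hPQ a := klBin_ne_top_iff.1 (hfin a)
  have hcompl := sum_one_sub_mul_log_div_one_sub_nonneg hP hPsum hQ hQsum fun a => (hPQ a).2
  rw [klFin, if_pos fun a => (hPQ a).1]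
  calc ENNReal.ofReal (∑ a, P a * log (P a / Q a))
      ≤ ENNReal.ofReal (∑ a, (P a * log (P a / Q a)
          + (1 - P a) * log ((1 - P a) / (1 - Q a)))) := by
        rw [Finset.sum_add_distrib]
        exact ENNReal.ofReal_le_ofReal (le_add_of_nonneg_right hcompl)
    _ ≤ ∑ a, ENNReal.ofReal (P a * log (P a / Q a)
          + (1 - P a) * log ((1 - P a) / (1 - Q a))) := ENNReal.ofReal_sum_le _ _
    _ = ∑ a, klBin (P a) (Q a) := Finset.sum_congr rfl fun a _ => (klBin_of_ne_top (hfin a)).symm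
end

section
/- Let A be a finite set with |A| ≥ 2 and let P and Q be probability distributions on A. Then Σ_{x ∈ A} kl(P(x), Q(x)) − KL(P; Q) = (|A| − 1) Σ_{x ∈ A} ((1 − P(x))/(|A| − 1)) log( ((1 − P(x))/(|A| − 1)) / ((1 − Q(x))/(|A| − 1)) ), and this quantity is non-negative. -/
open Real Set
open scoped ENNReal

/-
Both sides are `+∞` in the same degenerate cases, `Q(x) = 0 < P(x)` or `Q(x) = 1 > P(x)`.
Otherwise, with `c = |A| - 1`, the factors `1/c` cancel inside the logarithm, so termwise
`(1 - p) log ((1 - p)/(1 - q)) = c · p̃ log (p̃/q̃)` for `p̃ = (1 - p)/c`, `q̃ = (1 - q)/c`, and summing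
gives the identity in `ℝ`. The bound `p - q ≤ p log (p/q)`, summed (Gibbs' inequality, as `P̃` and
`Q̃` are again probability vectors) or applied to both halves of a binary term, makes every real
quantity involved non-negative, which carries the identity over to `ℝ≥0∞`.
-/

lemma sub_le_mul_log_div_s15 {p q : ℝ} (hp : 0 ≤ p) (hq : 0 ≤ q) (hpq : q = 0 → p = 0) :
    p - q ≤ p * log (p / q) := by
  rcases hp.eq_or_lt with rfl | hp
  · simpa using hq
  have hq : 0 < q := hq.lt_of_ne' fun h => hp.ne' (hpq h)
  have hlog := one_sub_inv_le_log_of_pos (div_pos hp hq)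
  rw [inv_div] at hlog
  calc p - q = p * (1 - q / p) := by field_simp
    _ ≤ p * log (p / q) := mul_le_mul_of_nonneg_left hlog hp.le

lemma binary_mul_log_div_nonneg {p q : ℝ} (hp0 : 0 ≤ p) (hp1 : p ≤ 1) (hq0 : 0 ≤ q)
    (hq1 : q ≤ 1) (h0 : q = 0 → p = 0) (h1 : q = 1 → p = 1) :
    0 ≤ p * log (p / q) + (1 - p) * log ((1 - p) / (1 - q)) := by
  have := sub_le_mul_log_div_s15 hp0 hq0 h0
  have := sub_le_mul_log_div_s15 (sub_nonneg.2 hp1) (sub_nonneg.2 hq1)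
    fun h => by rw [h1 (by linarith)]; ring
  linarith

lemma one_sub_div_eq_zero_iff {x c : ℝ} (hc : c ≠ 0) : (1 - x) / c = 0 ↔ x = 1 := by
  rw [div_eq_zero_iff, sub_eq_zero, eq_comm, or_iff_left hc]

lemma mul_log_div_eq_mul_div_mul_log_div_div {x y c : ℝ} (hc : c ≠ 0) :
    x * log (x / y) = c * (x / c * log (x / c / (y / c))) := by
  rw [div_div_div_cancel_right₀ hc]
  field_simp

section

variable {A : Type*} [Fintype A] {P Q : A → ℝ}

lemma sum_mul_log_div_nonneg_s15 (hP : ∀ a, 0 ≤ P a) (hQ : ∀ a, 0 ≤ Q a) (hsum : ∑ a, Q a ≤ ∑ a, P a) (hPQ : ∀ a, Q a = 0 → P a = 0) :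
    0 ≤ ∑ a, P a * log (P a / Q a) :=
  calc 0 ≤ ∑ a, (P a - Q a) := by rw [Finset.sum_sub_distrib]; linarith
    _ ≤ _ := Finset.sum_le_sum fun a _ => sub_le_mul_log_div_s15 (hP a) (hQ a) (hPQ a)

lemma le_one_of_sum_eq_one_s15 (hP : ∀ a, 0 ≤ P a) (hsum : ∑ a, P a = 1) (a : A) : P a ≤ 1 :=
  hsum ▸ Finset.single_le_sum (fun b _ => hP b) (Finset.mem_univ a)

lemma sum_one_sub_div_card_sub_one (hsum : ∑ a, P a = 1) (hA : (Fintype.card A : ℝ) - 1 ≠ 0) :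
    ∑ a, (1 - P a) / ((Fintype.card A : ℝ) - 1) = 1 := by
  rw [← Finset.sum_div, Finset.sum_sub_distrib, hsum, Finset.sum_const, Finset.card_univ,
    nsmul_one, div_self hA]

lemma sum_binary_mul_log_div_eq {c : ℝ} (hc : c ≠ 0) :
    ∑ a, (P a * log (P a / Q a) + (1 - P a) * log ((1 - P a) / (1 - Q a))) =
      ∑ a, P a * log (P a / Q a) +
        c * ∑ a, (1 - P a) / c * log ((1 - P a) / c / ((1 - Q a) / c)) := by
  rw [Finset.sum_add_distrib, Finset.mul_sum]
  exact congrArg _ (Finset.sum_congr rfl fun a _ => mul_log_div_eq_mul_div_mul_log_div_div hc)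

lemma klFin_eq_top (h : ∃ a, Q a = 0 ∧ P a ≠ 0) : klFin P Q = ⊤ :=
  if_neg (by push Not; exact h)

lemma klFin_eq_ofReal (h : ∀ a, Q a = 0 → P a = 0) :
    klFin P Q = ENNReal.ofReal (∑ a, P a * log (P a / Q a)) :=
  if_pos h

end

lemma klBin_eq_top {p q : ℝ} (h : (q = 0 ∧ p ≠ 0) ∨ (q = 1 ∧ p ≠ 1)) : klBin p q = ⊤ :=
  if_pos h

lemma klBin_eq_ofReal {p q : ℝ} (h0 : q = 0 → p = 0) (h1 : q = 1 → p = 1) :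
    klBin p q = ENNReal.ofReal (p * log (p / q) + (1 - p) * log ((1 - p) / (1 - q))) :=
  if_neg (by tauto)

lemma sum_klBin_eq_of_absolutelyContinuous {A : Type*} [Fintype A] {P Q : A → ℝ}
    (hc : 0 < (Fintype.card A : ℝ) - 1) (hP : ∀ a, 0 ≤ P a) (hPsum : ∑ a, P a = 1)
    (hQ : ∀ a, 0 ≤ Q a) (hQsum : ∑ a, Q a = 1)
    (h0 : ∀ a, Q a = 0 → P a = 0) (h1 : ∀ a, Q a = 1 → P a = 1) :
    ∑ a, klBin (P a) (Q a) =
      klFin P Q + ((Fintype.card A : ℝ≥0∞) - 1) *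
        klFin (fun a => (1 - P a) / ((Fintype.card A : ℝ) - 1))
          (fun a => (1 - Q a) / ((Fintype.card A : ℝ) - 1)) := by
  set c : ℝ := (Fintype.card A : ℝ) - 1
  have hcoef : (Fintype.card A : ℝ≥0∞) - 1 = ENNReal.ofReal c := by
    rw [ENNReal.ofReal_sub _ zero_le_one, ENNReal.ofReal_natCast, ENNReal.ofReal_one]
  have h1' (a : A) (h : (1 - Q a) / c = 0) : (1 - P a) / c = 0 := by
    rw [one_sub_div_eq_zero_iff hc.ne'] at h ⊢
    exact h1 a h
  have hP1 := le_one_of_sum_eq_one_s15 hP hPsum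
  have hQ1 := le_one_of_sum_eq_one_s15 hQ hQsum
  have hS : 0 ≤ ∑ a, P a * log (P a / Q a) :=
    sum_mul_log_div_nonneg_s15 hP hQ (hQsum.trans hPsum.symm).le h0
  have hS' : 0 ≤ ∑ a, (1 - P a) / c * log ((1 - P a) / c / ((1 - Q a) / c)) :=
    sum_mul_log_div_nonneg_s15 (fun a => div_nonneg (sub_nonneg.2 (hP1 a)) hc.le)
      (fun a => div_nonneg (sub_nonneg.2 (hQ1 a)) hc.le)
      (by rw [sum_one_sub_div_card_sub_one hPsum hc.ne',
        sum_one_sub_div_card_sub_one hQsum hc.ne']) h1'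
  rw [Finset.sum_congr rfl fun a _ => klBin_eq_ofReal (h0 a) (h1 a),
    ← ENNReal.ofReal_sum_of_nonneg fun a _ =>
      binary_mul_log_div_nonneg (hP a) (hP1 a) (hQ a) (hQ1 a) (h0 a) (h1 a),
    sum_binary_mul_log_div_eq hc.ne', ENNReal.ofReal_add hS (mul_nonneg hc.le hS'),
    ENNReal.ofReal_mul hc.le, klFin_eq_ofReal h0, klFin_eq_ofReal h1', hcoef]

/-- **Decomposition of the coordinatewise binary entropies:** on a finite set `A` with
`|A| ≥ 2`, `Σ_x kl(P(x), Q(x)) - KL(P; Q)` equals the non-negative quantity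
`(|A|-1) Σ_x ((1-P(x))/(|A|-1)) log( ((1-P(x))/(|A|-1)) / ((1-Q(x))/(|A|-1)) )`
(the difference being expressed additively, in `ℝ≥0∞`:
`Σ_x kl(P(x),Q(x)) = KL(P;Q) + (|A|-1)·KL(P̃;Q̃)` where
`P̃(x) = (1-P(x))/(|A|-1)`, `Q̃(x) = (1-Q(x))/(|A|-1)`). -/
theorem sum_klBin_sub_klFin_eq {A : Type*} [Fintype A] (hA : 2 ≤ Fintype.card A)
    (P Q : A → ℝ)
    (hP : ∀ a, 0 ≤ P a) (hPsum : ∑ a, P a = 1)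
    (hQ : ∀ a, 0 ≤ Q a) (hQsum : ∑ a, Q a = 1) :
    (∑ a, klBin (P a) (Q a)) =
      klFin P Q + ((Fintype.card A : ℝ≥0∞) - 1) *
        klFin (fun a => (1 - P a) / ((Fintype.card A : ℝ) - 1))
          (fun a => (1 - Q a) / ((Fintype.card A : ℝ) - 1)) ∧
    0 ≤ ((Fintype.card A : ℝ≥0∞) - 1) *
        klFin (fun a => (1 - P a) / ((Fintype.card A : ℝ) - 1))
          (fun a => (1 - Q a) / ((Fintype.card A : ℝ) - 1)) := by
  refine ⟨?_, zero_le⟩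
  by_cases h0 : ∃ a, Q a = 0 ∧ P a ≠ 0
  · obtain ⟨a, hQa, hPa⟩ := h0
    rw [ENNReal.sum_eq_top.2 ⟨a, Finset.mem_univ a, klBin_eq_top (.inl ⟨hQa, hPa⟩)⟩,
      klFin_eq_top ⟨a, hQa, hPa⟩, top_add]
  have hc : 0 < (Fintype.card A : ℝ) - 1 := by
    have : (2 : ℝ) ≤ Fintype.card A := by exact_mod_cast hA
    linarith
  by_cases h1 : ∃ a, Q a = 1 ∧ P a ≠ 1
  · obtain ⟨a, hQa, hPa⟩ := h1
    have hcompl : klFin (fun a => (1 - P a) / ((Fintype.card A : ℝ) - 1))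
        (fun a => (1 - Q a) / ((Fintype.card A : ℝ) - 1)) = ⊤ :=
      klFin_eq_top ⟨a, (one_sub_div_eq_zero_iff hc.ne').2 hQa,
        mt (one_sub_div_eq_zero_iff hc.ne').1 hPa⟩
    have hcoef : (Fintype.card A : ℝ≥0∞) - 1 ≠ 0 :=
      (tsub_pos_of_lt (by exact_mod_cast hA)).ne'
    rw [ENNReal.sum_eq_top.2 ⟨a, Finset.mem_univ a, klBin_eq_top (.inr ⟨hQa, hPa⟩)⟩, hcompl,
      ENNReal.mul_top hcoef, add_top]
  push Not at h0 h1
  exact sum_klBin_eq_of_absolutelyContinuous hc hP hPsum hQ hQsum h0 h1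
end
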